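/- Fix j ∈ ℝ⁴, let g be a symmetric invertible 4×4 real matrix with det g < 0 and jᵀ g j < 0, let n(g) = √(−jᵀ g j)/√(−det g), u = j/(√(−det g) n(g)), and let e : ℝ → ℝ be differentiable at n(g). Define the Lagrangian density L(g) = −√(−det g) · n(g) · e(n(g)). Then for every symmetric 4×4 matrix H, (d/dt)|_{t=0} L(g + tH) = (1/2) Σ_{μν} T^{μν} H_{μν}, where T^{μν} = √(−det g) ((ρ + p) u^μ u^ν + p (g⁻¹)^{μν}) with ρ = n e(n) and p = n² e'(n). That is, the variation of the barotropic-fluid Lagrangian with respect to the metric yields the ideal-fluid stress-energy tensor density. -/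

import Mathlib

/-!
Jacobi's formula gives `d/dt √(-det(g + tH)) = ½ √(-det g) tr(g⁻¹H)` at `t = 0`. Since
`√(-det g) · n = √(-jᵀgj)`, the logarithmic derivative of `n` is `½ (jᵀHj / jᵀgj - tr(g⁻¹H))`.
In the product rule for `-√(-det g) n e(n)`, the `jᵀHj` terms assemble into `(ρ + p) uᵀHu`
(because `jᵀgj = -(√(-det g) n)²`) and the surviving trace term is `p tr(g⁻¹H)`.
-/
open scoped BigOperators

/-- The rest mole density `n(g) = √(−Σ g_{μν} j^μ j^ν)/√(−det g)`. -/
noncomputable def nOf (j : Fin 4 → ℝ) (g : Matrix (Fin 4) (Fin 4) ℝ) : ℝ :=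
  Real.sqrt (-(∑ μ, ∑ ν, g μ ν * j μ * j ν)) / Real.sqrt (-g.det)

/-- The four-velocity `u^μ = j^μ/(√(−det g) n(g))`. -/
noncomputable def uOf (j : Fin 4 → ℝ) (g : Matrix (Fin 4) (Fin 4) ℝ) (μ : Fin 4) : ℝ :=
  j μ / (Real.sqrt (-g.det) * nOf j g)

namespace Matrix

theorem trace_mul_eq_sum_sum_of_isSymm {ι R : Type*} [Fintype ι] [CommSemiring R]
    {A B : Matrix ι ι R} (hB : B.IsSymm) : trace (A * B) = ∑ i, ∑ j, A i j * B i j := by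
  simp only [trace, diag, mul_apply, hB.apply]

section Jacobi

variable {𝕜 ι : Type*} [NontriviallyNormedField 𝕜] [Fintype ι] [DecidableEq ι]

theorem hasDerivAt_det_one_add_smul (M : Matrix ι ι 𝕜) :
    HasDerivAt (fun t : 𝕜 => det (1 + t • M)) (trace M) 0 := by
  have hpoly : (fun t : 𝕜 => det (1 + t • M))
      = fun t => (det (1 + (Polynomial.X : Polynomial 𝕜) • M.map Polynomial.C)).eval t := by
    funext t
    simp [eval_det, ← smul_eq_mul_diagonal]
  rw [hpoly, ← derivative_det_one_add_X_smul]
  exact Polynomial.hasDerivAt _ 0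

theorem hasDerivAt_det_add_smul {A : Matrix ι ι 𝕜} (hA : A.det ≠ 0) (B : Matrix ι ι 𝕜) :
    HasDerivAt (fun t : 𝕜 => det (A + t • B)) (det A * trace (A⁻¹ * B)) 0 := by
  have hfac : ∀ t : 𝕜, A + t • B = A * (1 + t • (A⁻¹ * B)) := fun t => by
    rw [Matrix.mul_add, Matrix.mul_one, Matrix.mul_smul, ← Matrix.mul_assoc,
      mul_nonsing_inv A hA.isUnit, Matrix.one_mul]
  simp_rw [hfac, det_mul]
  exact (hasDerivAt_det_one_add_smul _).const_mul _

end Jacobi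

end Matrix

theorem hasDerivAt_sum_sum_add_smul_mul_mul {𝕜 ι : Type*} [NontriviallyNormedField 𝕜] [Fintype ι]
    (A B : Matrix ι ι 𝕜) (v : ι → 𝕜) (x : 𝕜) :
    HasDerivAt (fun t => ∑ i, ∑ j, (A + t • B) i j * v i * v j)
      (∑ i, ∑ j, B i j * v i * v j) x := by
  refine HasDerivAt.fun_sum fun i _ => HasDerivAt.fun_sum fun k _ => ?_
  simpa using
    ((((hasDerivAt_id x).mul_const (B i k)).const_add (A i k)).mul_const (v i)).mul_const (v k)

theorem HasDerivAt.sqrt_neg {f : ℝ → ℝ} {f' x : ℝ} (hf : HasDerivAt f f' x) (hx : f x < 0) :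
    HasDerivAt (fun t => √(-f t)) (-f' / (2 * √(-f x))) x :=
  hf.neg.sqrt (by simpa using hx.ne)

theorem hasDerivAt_nOf_add_smul {j : Fin 4 → ℝ} {g : Matrix (Fin 4) (Fin 4) ℝ} (hdet : g.det < 0)
    (htl : ∑ μ, ∑ ν, g μ ν * j μ * j ν < 0) (H : Matrix (Fin 4) (Fin 4) ℝ) :
    HasDerivAt (fun t : ℝ => nOf j (g + t • H))
      (nOf j g / 2 * ((∑ μ, ∑ ν, H μ ν * j μ * j ν) / (∑ μ, ∑ ν, g μ ν * j μ * j ν)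
        - Matrix.trace (g⁻¹ * H))) 0 := by
  have hs := (hasDerivAt_sum_sum_add_smul_mul_mul g H j 0).sqrt_neg (by simpa using htl)
  have hr := (Matrix.hasDerivAt_det_add_smul hdet.ne H).sqrt_neg (by simpa using hdet)
  have hrpos : 0 < √(-g.det) := Real.sqrt_pos.2 (neg_pos.2 hdet)
  have hspos : 0 < √(-(∑ μ, ∑ ν, g μ ν * j μ * j ν)) := Real.sqrt_pos.2 (neg_pos.2 htl)
  refine (hs.div hr (by simpa using hrpos.ne')).congr_deriv ?_
  have hQne := htl.ne
  simp only [nOf, zero_smul, add_zero]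
  field_simp
  rw [Real.sq_sqrt (neg_nonneg.2 hdet.le), Real.sq_sqrt (neg_nonneg.2 htl.le)]
  ring

theorem sq_sqrt_neg_det_mul_nOf {j : Fin 4 → ℝ} {g : Matrix (Fin 4) (Fin 4) ℝ} (hdet : g.det < 0)
    (htl : ∑ μ, ∑ ν, g μ ν * j μ * j ν < 0) :
    (√(-g.det) * nOf j g) ^ 2 = -∑ μ, ∑ ν, g μ ν * j μ * j ν := by
  have hr : √(-g.det) ≠ 0 := (Real.sqrt_pos.2 (neg_pos.2 hdet)).ne'
  rw [nOf, mul_div_cancel₀ _ hr, Real.sq_sqrt (neg_nonneg.2 htl.le)]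

theorem hasDerivAt_fluidLagrangian {j : Fin 4 → ℝ} {g : Matrix (Fin 4) (Fin 4) ℝ}
    (hdet : g.det < 0) (htl : ∑ μ, ∑ ν, g μ ν * j μ * j ν < 0) {e : ℝ → ℝ}
    (he : DifferentiableAt ℝ e (nOf j g)) (H : Matrix (Fin 4) (Fin 4) ℝ) :
    HasDerivAt (fun t : ℝ => -√(-(g + t • H).det) * nOf j (g + t • H) * e (nOf j (g + t • H)))
      (√(-g.det) / 2 * ((nOf j g * e (nOf j g) + nOf j g ^ 2 * deriv e (nOf j g)) *
          (∑ μ, ∑ ν, H μ ν * j μ * j ν) / (√(-g.det) * nOf j g) ^ 2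
        + nOf j g ^ 2 * deriv e (nOf j g) * Matrix.trace (g⁻¹ * H))) 0 := by
  have hr := (Matrix.hasDerivAt_det_add_smul hdet.ne H).sqrt_neg (by simpa using hdet)
  have hn := hasDerivAt_nOf_add_smul hdet htl H
  have he' : HasDerivAt e (deriv e (nOf j g)) (nOf j (g + (0 : ℝ) • H)) := by
    simpa using he.hasDerivAt
  refine ((hr.neg.mul hn).mul (he'.comp 0 hn)).congr_deriv ?_
  have hr2 := Real.sq_sqrt (neg_nonneg.2 hdet.le)
  have hrpos : 0 < √(-g.det) := Real.sqrt_pos.2 (neg_pos.2 hdet)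
  have hnpos : 0 < nOf j g := div_pos (Real.sqrt_pos.2 (neg_pos.2 htl)) hrpos
  simp only [Pi.neg_apply, Pi.mul_apply, Function.comp_apply, zero_smul, add_zero]
  rw [show ∑ μ, ∑ ν, g μ ν * j μ * j ν = -(√(-g.det) * nOf j g) ^ 2 by
    linarith [sq_sqrt_neg_det_mul_nOf hdet htl]]
  generalize √(-g.det) = r at *
  rw [show g.det = -r ^ 2 by linarith]
  field_simp
  ring

theorem sum_sum_perfectFluidTensor_mul {ι : Type*} [Fintype ι] (r a b k : ℝ) (v : ι → ℝ)
    (G : Matrix ι ι ℝ) {H : Matrix ι ι ℝ} (hH : H.IsSymm) :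
    ∑ μ, ∑ ν, (r * (a * (v μ / k) * (v ν / k) + b * G μ ν)) * H μ ν
      = r * (a * (∑ μ, ∑ ν, H μ ν * v μ * v ν) / k ^ 2 + b * Matrix.trace (G * H)) := by
  simp only [Matrix.trace_mul_eq_sum_sum_of_isSymm hH, Finset.mul_sum, Finset.sum_div,
    ← Finset.sum_add_distrib]
  refine Finset.sum_congr rfl fun μ _ => Finset.sum_congr rfl fun ν _ => ?_
  ring

theorem variation_of_fluid_lagrangian_general (j : Fin 4 → ℝ) (g : Matrix (Fin 4) (Fin 4) ℝ)
    (hdet : g.det < 0)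
    (htl : ∑ μ, ∑ ν, g μ ν * j μ * j ν < 0)
    (e : ℝ → ℝ) (he : DifferentiableAt ℝ e (nOf j g))
    (H : Matrix (Fin 4) (Fin 4) ℝ) (hH : H.IsSymm) :
    deriv (fun t : ℝ =>
        -Real.sqrt (-(g + t • H).det) * nOf j (g + t • H) * e (nOf j (g + t • H))) 0
      = (1 / 2) * ∑ μ, ∑ ν,
          (Real.sqrt (-g.det) *
            ((nOf j g * e (nOf j g) + (nOf j g) ^ 2 * deriv e (nOf j g)) *
                uOf j g μ * uOf j g ν
              + (nOf j g) ^ 2 * deriv e (nOf j g) * g⁻¹ μ ν)) * H μ ν := by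
  rw [(hasDerivAt_fluidLagrangian hdet htl he H).deriv]
  simp only [uOf]
  rw [sum_sum_perfectFluidTensor_mul _ _ _ _ _ _ hH]
  ring

/-- Variation of the barotropic-fluid Lagrangian density `L(g) = −√(−det g) n(g) e(n(g))`
with respect to the metric yields the ideal-fluid stress-energy tensor density:
`(d/dt)|₀ L(g + tH) = (1/2) Σ_{μν} T^{μν} H_{μν}` with
`T^{μν} = √(−det g) ((ρ + p) u^μ u^ν + p (g⁻¹)^{μν})`, `ρ = n e(n)`, `p = n² e'(n)`. -/
theorem variation_of_fluid_lagrangian (j : Fin 4 → ℝ) (g : Matrix (Fin 4) (Fin 4) ℝ)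
    (hsymm : g.IsSymm) (hinv : IsUnit g.det) (hdet : g.det < 0)
    (htl : ∑ μ, ∑ ν, g μ ν * j μ * j ν < 0)
    (e : ℝ → ℝ) (he : DifferentiableAt ℝ e (nOf j g))
    (H : Matrix (Fin 4) (Fin 4) ℝ) (hH : H.IsSymm) :
    deriv (fun t : ℝ =>
        -Real.sqrt (-(g + t • H).det) * nOf j (g + t • H) * e (nOf j (g + t • H))) 0
      = (1 / 2) * ∑ μ, ∑ ν,
          (Real.sqrt (-g.det) *
            ((nOf j g * e (nOf j g) + (nOf j g) ^ 2 * deriv e (nOf j g)) *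
                uOf j g μ * uOf j g ν
              + (nOf j g) ^ 2 * deriv e (nOf j g) * g⁻¹ μ ν)) * H μ ν :=
  variation_of_fluid_lagrangian_general j g hdet htl e he H hH
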